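/- Consider the cccq channel taking three bits (x,y,z) ∈ {0,1}³ to the single-qubit pure states ψ_{x,y,z} given by: 000→|0⟩, 001→|+⟩, 010→|1⟩, 011→|−⟩, 100→|1⟩, 101→|−⟩, 110→|0⟩, 111→|+⟩, where |±⟩ = (|0⟩±|1⟩)/√2. Let ρ^{XYZB} be the classical–quantum state obtained from independent uniform input distributions on x, y, z. Then: (i) H_min(B|ZY)_ρ = H(B|ZY)_ρ = 1, H_min(B|Z)_ρ = H(B|Z)_ρ = 1, H_min(B|XZ)_ρ = H(B|XZ)_ρ = 1, H_min(B|X)_ρ = H(B|X)_ρ = 1; (ii) H(B|XYZ)_ρ = 0; and (iii) H(B|XY)_ρ = H₂(cos²(π/8)), where H₂(p) = −p log₂ p − (1−p) log₂(1−p). -/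

import Mathlib

/-!
Every entropy in the statement is that of a qubit density matrix, whose spectrum `{p, 1 - p}` is
determined by its determinant `p (1 - p)`. For each `z` the states `bb84 · · z` form an orthonormal
basis (computational or Hadamard) and, with the other bit fixed, `x` and `y` each run through both
basis vectors; so every conditional state in (i) is the maximally mixed state `(1 / 2) • 1`
(determinant `1 / 4`), and the pure states of (ii) have determinant `0`. In (iii) the state
averages one vector of each basis and has determinant `1 / 8 = cos² (π / 8) sin² (π / 8)`.
-/

open scoped BigOperators ComplexOrder

noncomputable section

namespace QIC

/-- von Neumann entropy in bits, via eigenvalues (convention `0·log 0 = 0`). -/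
def vnEntropy {m : Type*} [Fintype m] [DecidableEq m] (ρ : Matrix m m ℂ) : ℝ :=
  if h : ρ.IsHermitian then -∑ i, h.eigenvalues i * Real.logb 2 (h.eigenvalues i) else 0

/-- min-entropy in bits: `−log₂` of the largest eigenvalue. -/
def minEntropy {m : Type*} [Fintype m] [DecidableEq m] (ρ : Matrix m m ℂ) : ℝ :=
  if h : ρ.IsHermitian then -Real.logb 2 (⨆ i, h.eigenvalues i) else 0

/-- A density operator: positive semidefinite with unit trace. -/
def IsDensity {m : Type*} [Fintype m] [DecidableEq m] (ρ : Matrix m m ℂ) : Prop :=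
  ρ.PosSemidef ∧ ρ.trace = 1

/-- A POVM: a finite family of positive semidefinite operators summing to the identity. -/
def IsPOVM {ι m : Type*} [Fintype ι] [Fintype m] [DecidableEq m]
    (Λ : ι → Matrix m m ℂ) : Prop :=
  (∀ i, (Λ i).PosSemidef) ∧ ∑ i, Λ i = 1

/-- A probability distribution on a finite alphabet. -/
def IsProbDist {X : Type*} [Fintype X] (p : X → ℝ) : Prop :=
  (∀ x, 0 ≤ p x) ∧ ∑ x, p x = 1

/-- `n`-fold tensor product of matrices on `Fin d`. -/
def tensorPow {d n : ℕ} (f : Fin n → Matrix (Fin d) (Fin d) ℂ) :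
    Matrix (Fin n → Fin d) (Fin n → Fin d) ℂ :=
  Matrix.of fun i j => ∏ k, f k (i k) (j k)

/-- The positive semidefinite square root, as `Matrix.PosSemidef.sqrt` was defined in Mathlib
(removed since). -/
def PosSemidef.sqrt {m : Type*} [Fintype m] [DecidableEq m] {A : Matrix m m ℂ}
    (hA : A.PosSemidef) : Matrix m m ℂ :=
  hA.1.eigenvectorUnitary.1 * Matrix.diagonal ((↑) ∘ Real.sqrt ∘ hA.1.eigenvalues) *
    (star hA.1.eigenvectorUnitary : Matrix m m ℂ)

/-- Positive semidefinite square root (zero on non-PSD matrices). -/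
def msqrt {m : Type*} [Fintype m] [DecidableEq m] (X : Matrix m m ℂ) : Matrix m m ℂ :=
  open Classical in if h : X.PosSemidef then PosSemidef.sqrt h else 0

/-- Trace norm `‖X‖₁ = Tr √(XᴴX)`. -/
def traceNorm {m : Type*} [Fintype m] [DecidableEq m] (X : Matrix m m ℂ) : ℝ :=
  (PosSemidef.sqrt (Matrix.posSemidef_conjTranspose_mul_self X)).trace.re

/-- Loewner order: `A ≤ B` iff `B − A` is positive semidefinite. -/
def loewnerLE {m : Type*} [Fintype m] [DecidableEq m] (A B : Matrix m m ℂ) : Prop :=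
  (B - A).PosSemidef

/-- Outer product `|ψ⟩⟨ψ|` of a vector. -/
def outer {m : Type*} (v : m → ℂ) : Matrix m m ℂ :=
  Matrix.of fun i j => v i * star (v j)

/-- Binary entropy function `H₂(p) = −p log₂ p − (1−p) log₂(1−p)`. -/
def binEnt (p : ℝ) : ℝ :=
  -(p * Real.logb 2 p) - (1 - p) * Real.logb 2 (1 - p)

/-- The "BB84" cccq multiple access channel: three input bits `x, y, z` produce the qubit
states `000→|0⟩, 001→|+⟩, 010→|1⟩, 011→|−⟩, 100→|1⟩, 101→|−⟩, 110→|0⟩, 111→|+⟩`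
(the bit `x⊕y` encoded in the basis selected by `z`). -/
def bb84 (x y z : Fin 2) : Fin 2 → ℂ :=
  if z = 0 then
    (if x = y then ![1, 0] else ![0, 1])
  else
    (if x = y then ![(Real.sqrt 2 : ℂ)⁻¹, (Real.sqrt 2 : ℂ)⁻¹]
     else ![(Real.sqrt 2 : ℂ)⁻¹, -(Real.sqrt 2 : ℂ)⁻¹])

open Matrix

lemma binEnt_zero : binEnt 0 = 0 := by simp [binEnt]

lemma binEnt_half : binEnt (1 / 2) = 1 := by
  have : Real.logb 2 (1 / 2) = -1 := by simp [Real.logb_inv]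
  rw [binEnt]; norm_num [this]

lemma cos_sq_pi_div_eight_mul_one_sub :
    Real.cos (Real.pi / 8) ^ 2 * (1 - Real.cos (Real.pi / 8) ^ 2) = 1 / 8 := by
  rw [Real.cos_sq, show 2 * (Real.pi / 8) = Real.pi / 4 by ring, Real.cos_pi_div_four]
  nlinarith [Real.sq_sqrt (show (0:ℝ) ≤ 2 by norm_num)]

lemma isHermitian_outer {m : Type*} (v : m → ℂ) : (outer v).IsHermitian := by
  ext i j
  simp [outer, mul_comm]

lemma _root_.Matrix.IsHermitian.eigenvalues_fin_two_of_trace_det {A : Matrix (Fin 2) (Fin 2) ℂ}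
    (hA : A.IsHermitian) {p : ℝ} (htr : A.trace = 1) (hdet : A.det = (p * (1 - p) : ℝ)) :
    hA.eigenvalues 0 = p ∧ hA.eigenvalues 1 = 1 - p ∨
      hA.eigenvalues 0 = 1 - p ∧ hA.eigenvalues 1 = p := by
  have hsum : hA.eigenvalues 0 + hA.eigenvalues 1 = 1 := by
    have := hA.trace_eq_sum_eigenvalues
    rw [htr, Fin.sum_univ_two] at this
    simpa using congrArg Complex.re this.symm
  have hprod : hA.eigenvalues 0 * hA.eigenvalues 1 = p * (1 - p) := by
    have := hA.det_eq_prod_eigenvalues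
    rw [hdet, Fin.prod_univ_two] at this
    simpa using congrArg Complex.re this.symm
  have hroot : (hA.eigenvalues 0 - p) * (hA.eigenvalues 0 - (1 - p)) = 0 := by
    linear_combination hA.eigenvalues 0 * hsum - hprod
  rcases mul_eq_zero.mp hroot with h | h
  · left; constructor <;> linarith
  · right; constructor <;> linarith

lemma vnEntropy_eq_binEnt_of_trace_det {A : Matrix (Fin 2) (Fin 2) ℂ} (hA : A.IsHermitian)
    {p : ℝ} (htr : A.trace = 1) (hdet : A.det = (p * (1 - p) : ℝ)) : vnEntropy A = binEnt p := by
  rw [vnEntropy, dif_pos hA, Fin.sum_univ_two, binEnt]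
  rcases hA.eigenvalues_fin_two_of_trace_det htr hdet with ⟨h0, h1⟩ | ⟨h0, h1⟩ <;>
    rw [h0, h1] <;> ring

lemma minEntropy_eq_one_of_trace_det {A : Matrix (Fin 2) (Fin 2) ℂ} (hA : A.IsHermitian)
    (htr : A.trace = 1) (hdet : A.det = 1 / 4) : minEntropy A = 1 := by
  have hdet' : A.det = ((1 / 2) * (1 - 1 / 2) : ℝ) := by rw [hdet]; norm_num
  have heig : hA.eigenvalues = fun _ => 1 / 2 := by
    funext i
    rcases hA.eigenvalues_fin_two_of_trace_det htr hdet' with ⟨h0, h1⟩ | ⟨h0, h1⟩ <;>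
      fin_cases i <;> simp [h0, h1] <;> norm_num
  rw [minEntropy, dif_pos hA, heig, ciSup_const]
  simp [Real.logb_inv]

lemma vnEntropy_outer {v : Fin 2 → ℂ} (hv : ∑ i, v i * star (v i) = 1) :
    vnEntropy (outer v) = 0 := by
  rw [← binEnt_zero]
  refine vnEntropy_eq_binEnt_of_trace_det (isHermitian_outer v) ?_ ?_
  · simpa [trace_fin_two, outer, Fin.sum_univ_two] using hv
  · simp [det_fin_two, outer]; ring

lemma vnEntropy_half_smul_one : vnEntropy ((1 / 2 : ℝ) • (1 : Matrix (Fin 2) (Fin 2) ℂ)) = 1 := by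
  refine (vnEntropy_eq_binEnt_of_trace_det (isHermitian_one.smul (.all _)) ?_ ?_).trans
    binEnt_half <;> norm_num

lemma minEntropy_half_smul_one : minEntropy ((1 / 2 : ℝ) • (1 : Matrix (Fin 2) (Fin 2) ℂ)) = 1 :=
  minEntropy_eq_one_of_trace_det (isHermitian_one.smul (.all _)) (by norm_num) (by norm_num)

lemma inv_sqrt_two_mul_self : (Real.sqrt 2 : ℂ)⁻¹ * (Real.sqrt 2 : ℂ)⁻¹ = 1 / 2 := by
  rw [← mul_inv, ← Complex.ofReal_mul, Real.mul_self_sqrt zero_le_two]; norm_num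

lemma bb84_comm (x y z : Fin 2) : bb84 x y z = bb84 y x z := by
  simp [bb84, eq_comm]

lemma bb84_normalized (x y z : Fin 2) : ∑ i, bb84 x y z i * star (bb84 x y z i) = 1 := by
  fin_cases x <;> fin_cases y <;> fin_cases z <;>
    simp [bb84, Fin.sum_univ_two, inv_sqrt_two_mul_self] <;> norm_num

lemma sum_outer_bb84_left (y z : Fin 2) : ∑ x, outer (bb84 x y z) = 1 := by
  fin_cases y <;> fin_cases z <;> ext i j <;> fin_cases i <;> fin_cases j <;>
    simp [outer, bb84, Fin.sum_univ_two, inv_sqrt_two_mul_self] <;> norm_num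

lemma sum_outer_bb84_right (x z : Fin 2) : ∑ y, outer (bb84 x y z) = 1 := by
  simpa only [bb84_comm] using sum_outer_bb84_left x z

lemma trace_average_outer_bb84 (x y : Fin 2) :
    (∑ z, ((1:ℝ)/2) • outer (bb84 x y z)).trace = 1 := by
  fin_cases x <;> fin_cases y <;>
    simp [trace_fin_two, outer, bb84, Fin.sum_univ_two, inv_sqrt_two_mul_self] <;> norm_num

lemma det_average_outer_bb84 (x y : Fin 2) :
    (∑ z, ((1:ℝ)/2) • outer (bb84 x y z)).det = 1 / 8 := by
  fin_cases x <;> fin_cases y <;>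
    simp [det_fin_two, outer, bb84, Fin.sum_univ_two, inv_sqrt_two_mul_self] <;> norm_num

lemma vnEntropy_average_outer_bb84 (x y : Fin 2) :
    vnEntropy (∑ z, ((1:ℝ)/2) • outer (bb84 x y z)) =
      binEnt (Real.cos (Real.pi / 8) ^ 2) := by
  refine vnEntropy_eq_binEnt_of_trace_det ?_ (trace_average_outer_bb84 x y) ?_
  · exact isSelfAdjoint_sum _ fun z _ => (isHermitian_outer _).smul (.all _)
  · rw [det_average_outer_bb84, cos_sq_pi_div_eight_mul_one_sub]; norm_num

/-- **Entropy computations for the BB84 cccq multiple access channel with uniform inputs**: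
(i) the min-entropies `H_min(B|ZY), H_min(B|Z), H_min(B|XZ), H_min(B|X)` all equal the
corresponding von Neumann conditional entropies and take the maximal value `1`;
(ii) `H(B|XYZ) = 0`; (iii) `H(B|XY) = H₂(cos²(π/8))`. -/
theorem bb84_entropies :
    -- (i) conditioning on `Z,Y`
    ((⨅ z, ⨅ y, minEntropy (∑ x, ((1:ℝ)/2) • outer (bb84 x y z))) = 1 ∧
     (∑ z, ∑ y, ((1:ℝ)/4) * vnEntropy (∑ x, ((1:ℝ)/2) • outer (bb84 x y z))) = 1 ∧
     -- conditioning on `Z`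
     (⨅ z, minEntropy (∑ x, ∑ y, ((1:ℝ)/4) • outer (bb84 x y z))) = 1 ∧
     (∑ z, ((1:ℝ)/2) * vnEntropy (∑ x, ∑ y, ((1:ℝ)/4) • outer (bb84 x y z))) = 1 ∧
     -- conditioning on `X,Z`
     (⨅ x, ⨅ z, minEntropy (∑ y, ((1:ℝ)/2) • outer (bb84 x y z))) = 1 ∧
     (∑ x, ∑ z, ((1:ℝ)/4) * vnEntropy (∑ y, ((1:ℝ)/2) • outer (bb84 x y z))) = 1 ∧
     -- conditioning on `X`
     (⨅ x, minEntropy (∑ y, ∑ z, ((1:ℝ)/4) • outer (bb84 x y z))) = 1 ∧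
     (∑ x, ((1:ℝ)/2) * vnEntropy (∑ y, ∑ z, ((1:ℝ)/4) • outer (bb84 x y z))) = 1) ∧
    -- (ii) `H(B|XYZ) = 0`
    (∑ x, ∑ y, ∑ z, ((1:ℝ)/8) * vnEntropy (outer (bb84 x y z))) = 0 ∧
    -- (iii) `H(B|XY) = H₂(cos²(π/8))`
    (∑ x, ∑ y, ((1:ℝ)/4) * vnEntropy (∑ z, ((1:ℝ)/2) • outer (bb84 x y z)))
      = binEnt (Real.cos (Real.pi / 8) ^ 2) := by
  have quarter_sum : ∑ _ : Fin 2, (1 / 4 : ℝ) • (1 : Matrix (Fin 2) (Fin 2) ℂ) =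
      (1 / 2 : ℝ) • 1 := by
    rw [Fin.sum_univ_two, ← add_smul]; norm_num
  have hZY (y z : Fin 2) : ∑ x, ((1:ℝ)/2) • outer (bb84 x y z) = (1 / 2 : ℝ) • 1 := by
    rw [← Finset.smul_sum, sum_outer_bb84_left]
  have hXZ (x z : Fin 2) : ∑ y, ((1:ℝ)/2) • outer (bb84 x y z) = (1 / 2 : ℝ) • 1 := by
    rw [← Finset.smul_sum, sum_outer_bb84_right]
  have hZ (z : Fin 2) : ∑ x, ∑ y, ((1:ℝ)/4) • outer (bb84 x y z) = (1 / 2 : ℝ) • 1 := by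
    rw [Finset.sum_comm]
    simp only [← Finset.smul_sum, sum_outer_bb84_left, quarter_sum]
  have hX (x : Fin 2) : ∑ y, ∑ z, ((1:ℝ)/4) • outer (bb84 x y z) = (1 / 2 : ℝ) • 1 := by
    rw [Finset.sum_comm]
    simp only [← Finset.smul_sum, sum_outer_bb84_right, quarter_sum]
  refine ⟨?_, ?_, ?_⟩
  · simp only [hZY, hZ, hXZ, hX, minEntropy_half_smul_one, vnEntropy_half_smul_one,
      ciInf_const]
    norm_num [Fin.sum_univ_two]
  · simp [vnEntropy_outer (bb84_normalized _ _ _)]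
  · simp only [vnEntropy_average_outer_bb84]
    simp only [Fin.sum_univ_two]
    ring
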